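/- arXiv:2305.18681 — 4 statements merged into one kernel-verified Lean document; each statement's English description precedes it below -/
import Mathlib

section
/- If X_1,…,X_n are i.i.d., h: ℝ^l → ℝ is a bounded symmetric kernel with E h(X_1,…,X_l) = 0, l divides n, and the U-statistic U_{n,l}(h) admits the Hoeffding representation as an average over permutations of means of n/l i.i.d. terms, then for every t > 0, P(|U_{n,l}(h)| ≥ t) ≤ 2 exp(−(n/l)·t²/(2‖h‖_∞²)). -/
/-!
Hoeffding's representation writes `U_{n,l}(h)` as the average, over all permutations `σ` of the
sample, of the mean `W_σ` of `h` over the `n / l` disjoint blocks of `σ`. Each `W_σ` is a mean of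
`n / l` independent centred variables with values in `[-B, B]`, hence sub-Gaussian with variance
proxy `B² l / n` by Hoeffding's lemma. The `W_σ` are not independent, but by convexity of `exp`
an average of variables with a common sub-Gaussian bound on their moment generating functions
satisfies the same bound, and the Chernoff bound on both tails gives the result.
-/

open MeasureTheory ProbabilityTheory Finset Real
open scoped NNReal Nat

lemma ProbabilityTheory.iIndepFun.curry {Ω ι κ 𝓧 : Type*} {mΩ : MeasurableSpace Ω}
    {P : Measure Ω} [MeasurableSpace 𝓧] {X : ι × κ → Ω → 𝓧}
    (mX : ∀ p, Measurable (X p)) (h : iIndepFun X P) :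
    iIndepFun (fun i ω j ↦ X (i, j) ω) P := by
  have := h.isProbabilityMeasure
  have (p : ι × κ) : IsProbabilityMeasure (P.map (X p)) :=
    Measure.isProbabilityMeasure_map (mX p).aemeasurable
  have hblock (i : ι) :
      P.map (fun ω j ↦ X (i, j) ω) = Measure.infinitePi fun j ↦ P.map (X (i, j)) :=
    (h.precomp (Prod.mk_right_injective i)).map_fun_eq_infinitePi_map fun j ↦ mX _
  rw [iIndepFun_iff_map_fun_eq_infinitePi_map (fun i ↦ by fun_prop)]
  simp_rw [hblock]
  rw [← Measure.infinitePi_map_curry (fun i j ↦ P.map (X (i, j))),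
    ← h.map_fun_eq_infinitePi_map mX, Measure.map_map (by fun_prop) (by fun_prop)]
  rfl

namespace ProbabilityTheory.HasSubgaussianMGF
variable {Ω ι : Type*} {mΩ : MeasurableSpace Ω} {μ : Measure Ω} {c : ℝ≥0}

lemma sum_mul_of_sum_eq_one {X : ι → Ω → ℝ} {s : Finset ι} {w : ι → ℝ}
    (hw₀ : ∀ i ∈ s, 0 ≤ w i) (hw₁ : ∑ i ∈ s, w i = 1)
    (hX : ∀ i ∈ s, HasSubgaussianMGF (X i) c μ) :
    HasSubgaussianMGF (fun ω ↦ ∑ i ∈ s, w i * X i ω) c μ := by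
  have jensen (t : ℝ) (ω : Ω) :
      exp (t * ∑ i ∈ s, w i * X i ω) ≤ ∑ i ∈ s, w i * exp (t * X i ω) := by
    have := convexOn_exp.map_sum_le hw₀ hw₁ fun i _ ↦ Set.mem_univ (t * X i ω)
    simpa only [smul_eq_mul, Finset.mul_sum, mul_left_comm t] using this
  have hbound (t : ℝ) : Integrable (fun ω ↦ ∑ i ∈ s, w i * exp (t * X i ω)) μ :=
    integrable_finsetSum _ fun i hi ↦ ((hX i hi).integrable_exp_mul t).const_mul _
  have hmeas : AEMeasurable (fun ω ↦ ∑ i ∈ s, w i * X i ω) μ :=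
    Finset.aemeasurable_fun_sum s fun i hi ↦ (hX i hi).aemeasurable.const_mul (w i)
  have hint (t : ℝ) : Integrable (fun ω ↦ exp (t * ∑ i ∈ s, w i * X i ω)) μ :=
    (hbound t).mono' (hmeas.const_mul t).exp.aestronglyMeasurable
      (ae_of_all _ fun ω ↦ (norm_of_nonneg (exp_nonneg _)).trans_le (jensen t ω))
  refine ⟨hint, fun t ↦ ?_⟩
  calc mgf (fun ω ↦ ∑ i ∈ s, w i * X i ω) μ t
      ≤ ∫ ω, ∑ i ∈ s, w i * exp (t * X i ω) ∂μ := integral_mono (hint t) (hbound t) (jensen t)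
    _ = ∑ i ∈ s, w i * mgf (X i) μ t := by
        rw [integral_finsetSum _ fun i hi ↦ ((hX i hi).integrable_exp_mul t).const_mul _]
        simp only [integral_const_mul, mgf]
    _ ≤ ∑ i ∈ s, w i * exp (c * t ^ 2 / 2) :=
        sum_le_sum fun i hi ↦ mul_le_mul_of_nonneg_left ((hX i hi).mgf_le t) (hw₀ i hi)
    _ = exp (c * t ^ 2 / 2) := by rw [← Finset.sum_mul, hw₁, one_mul]

lemma measure_abs_ge_le [IsFiniteMeasure μ] {X : Ω → ℝ} (h : HasSubgaussianMGF X c μ) {ε : ℝ}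
    (hε : 0 ≤ ε) : μ.real {ω | ε ≤ |X ω|} ≤ 2 * exp (-ε ^ 2 / (2 * c)) :=
  calc μ.real {ω | ε ≤ |X ω|} ≤ μ.real ({ω | ε ≤ X ω} ∪ {ω | ε ≤ (-X) ω}) :=
        measureReal_mono fun ω (hω : ε ≤ |X ω|) ↦ (le_abs.mp hω :)
    _ ≤ μ.real {ω | ε ≤ X ω} + μ.real {ω | ε ≤ (-X) ω} := measureReal_union_le _ _
    _ ≤ 2 * exp (-ε ^ 2 / (2 * c)) := by
        linarith [h.measure_ge_le hε, h.neg.measure_ge_le hε]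

end ProbabilityTheory.HasSubgaussianMGF

lemma Finset.choose_card_nsmul_sum_perm_map {α M : Type*} [Fintype α] [DecidableEq α]
    [AddCommMonoid M] (s : Finset α) (F : Finset α → M) :
    (Fintype.card α).choose #s • ∑ σ : Equiv.Perm α, F (s.map σ.toEmbedding) =
      (Fintype.card α)! • ∑ t ∈ powersetCard #s univ, F t := by
  -- `Perm α` acts transitively on the `#s`-subsets, so this sum does not depend on `t`.
  have hconj (t) (ht : t ∈ powersetCard #s univ) :
      ∑ σ : Equiv.Perm α, F (t.map σ.toEmbedding) =
        ∑ σ : Equiv.Perm α, F (s.map σ.toEmbedding) := by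
    obtain ⟨ρ, rfl⟩ := Equiv.Perm.exists_map_finset_eq s t (mem_powersetCard.mp ht).2.symm
    simp_rw [Finset.map_map]
    exact Fintype.sum_equiv (Equiv.mulRight ρ) _ _ fun σ ↦ rfl
  have hinv (σ : Equiv.Perm α) :
      ∑ t ∈ powersetCard #s univ, F (t.map σ.toEmbedding) = ∑ t ∈ powersetCard #s univ, F t :=
    sum_equiv σ.finsetCongr (by simp) fun _ _ ↦ rfl
  calc (Fintype.card α).choose #s • ∑ σ : Equiv.Perm α, F (s.map σ.toEmbedding)
      = ∑ t ∈ powersetCard #s univ, ∑ σ : Equiv.Perm α, F (t.map σ.toEmbedding) := by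
        rw [sum_congr rfl hconj, sum_const, card_powersetCard, card_univ]
    _ = (Fintype.card α)! • ∑ t ∈ powersetCard #s univ, F t := by
        rw [sum_comm, sum_congr rfl fun σ _ ↦ hinv σ, sum_const, card_univ, Fintype.card_perm]

lemma apply_comp_eq_of_range_eq {ι α β γ : Type*} {h : (ι → β) → γ}
    (hsym : ∀ (σ : Equiv.Perm ι) (x : ι → β), h (x ∘ σ) = h x) {f g : ι → α}
    (hf : f.Injective) (hg : g.Injective) (hfg : Set.range f = Set.range g) (x : α → β) :
    h (x ∘ f) = h (x ∘ g) := by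
  let τ : Equiv.Perm ι :=
    (Equiv.ofInjective f hf).trans ((Equiv.setCongr hfg).trans (Equiv.ofInjective g hg).symm)
  have hτ : g ∘ τ = f := funext fun i ↦ by simp [τ, Equiv.apply_ofInjective_symm]
  rw [← hτ, ← Function.comp_assoc, hsym]

lemma apply_comp_orderIsoOfFin_eq {α β γ : Type*} [LinearOrder α] {l : ℕ}
    {h : (Fin l → β) → γ} (hsym : ∀ (σ : Equiv.Perm (Fin l)) (x : Fin l → β), h (x ∘ σ) = h x)
    {J : Finset α} (hJ : #J = l) {f : Fin l → α} (hf : f.Injective) (hfJ : Set.range f = J)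
    (x : α → β) : h (fun i ↦ x (J.orderIsoOfFin hJ i)) = h (x ∘ f) := by
  simp only [coe_orderIsoOfFin_apply]
  exact apply_comp_eq_of_range_eq hsym (J.orderEmbOfFin hJ).injective hf
    (by rw [range_orderEmbOfFin, hfJ]) x

noncomputable def blockMean {κ ι : Type*} [Fintype κ] (h : (ι → ℝ) → ℝ) (y : κ → ι → ℝ) : ℝ :=
  (Fintype.card κ : ℝ)⁻¹ * ∑ k, h (y k)

noncomputable def uStatistic {n l : ℕ} (h : (Fin l → ℝ) → ℝ) (x : Fin n → ℝ) : ℝ :=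
  (1 / (n.choose l : ℝ)) *
    ∑ J ∈ (univ.powersetCard l : Finset (Finset (Fin n))).attach,
      h (fun i ↦ x (J.1.orderIsoOfFin (mem_powersetCard.mp J.2).2 i))

theorem uStatistic_eq_sum_perm_blockMean {n m l : ℕ} (hm : m ≠ 0) (e : Fin m × Fin l ≃ Fin n)
    {h : (Fin l → ℝ) → ℝ} (hsym : ∀ (σ : Equiv.Perm (Fin l)) (x : Fin l → ℝ), h (x ∘ σ) = h x)
    (x : Fin n → ℝ) :
    uStatistic h x =
      ∑ σ : Equiv.Perm (Fin n), (n ! : ℝ)⁻¹ * blockMean h (fun k i ↦ x (σ (e (k, i)))) := by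
  let F : Finset (Fin n) → ℝ := fun J ↦
    if hJ : #J = l then h (fun i ↦ x (J.orderIsoOfFin hJ i)) else 0
  have hU : uStatistic h x = (n.choose l : ℝ)⁻¹ * ∑ J ∈ powersetCard l univ, F J := by
    rw [uStatistic, one_div, ← sum_attach (powersetCard l univ) F]
    congr 1
    refine sum_congr rfl fun J _ ↦ ?_
    simp only [F, dif_pos (mem_powersetCard.mp J.2).2]
  have hC : (n.choose l : ℝ) ≠ 0 := by
    have hn : m * l = n := by simpa using Fintype.card_congr e
    exact_mod_cast (Nat.choose_pos (hn ▸ Nat.le_mul_of_pos_left l (Nat.pos_of_ne_zero hm))).ne'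
  have hblock (k : Fin m) : ∑ σ : Equiv.Perm (Fin n), h (fun i ↦ x (σ (e (k, i)))) =
      n ! / n.choose l * ∑ J ∈ powersetCard l univ, F J := by
    let s : Finset (Fin n) :=
      univ.map ⟨fun i ↦ e (k, i), e.injective.comp (Prod.mk_right_injective k)⟩
    have hs : #s = l := by simp [s]
    have key := choose_card_nsmul_sum_perm_map s F
    rw [hs, Fintype.card_fin, nsmul_eq_mul, nsmul_eq_mul] at key
    rw [div_mul_eq_mul_div, eq_div_iff hC, mul_comm, ← key]
    congr 2
    ext σ
    have hσs : #(s.map σ.toEmbedding) = l := by simp [hs]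
    simp only [F, dif_pos hσs]
    refine (apply_comp_orderIsoOfFin_eq hsym hσs
      (σ.injective.comp (e.injective.comp (Prod.mk_right_injective k))) ?_ x).symm
    ext a
    simp [s, Equiv.eq_symm_apply]
  simp only [blockMean, Fintype.card_fin, ← Finset.mul_sum]
  rw [Finset.sum_comm, sum_congr rfl fun k _ ↦ hblock k, sum_const, card_univ, Fintype.card_fin,
    nsmul_eq_mul, hU]
  field_simp

lemma hasSubgaussianMGF_blockMean {Ω κ ι : Type*} {mΩ : MeasurableSpace Ω} {μ : Measure Ω}
    [Fintype κ] {Y : κ × ι → Ω → ℝ} (hY : ∀ p, Measurable (Y p)) (hindep : iIndepFun Y μ)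
    {h : (ι → ℝ) → ℝ} (hmeas : Measurable h) {B : ℝ} (hbdd : ∀ x, |h x| ≤ B)
    (hcent : ∀ k, ∫ ω, h (fun i ↦ Y (k, i) ω) ∂μ = 0) :
    HasSubgaussianMGF (fun ω ↦ blockMean h (fun k i ↦ Y (k, i) ω))
      (‖B‖₊ ^ 2 / Fintype.card κ) μ := by
  have := hindep.isProbabilityMeasure
  have hblock (k : κ) :
      HasSubgaussianMGF (fun ω ↦ h (fun i ↦ Y (k, i) ω)) ((‖B - -B‖₊ / 2) ^ 2) μ :=
    hasSubgaussianMGF_of_mem_Icc_of_integral_eq_zero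
      (hmeas.comp (measurable_pi_lambda _ fun i ↦ hY (k, i))).aemeasurable
      (ae_of_all _ fun ω ↦ abs_le.mp (hbdd _)) (hcent k)
  have hsum := HasSubgaussianMGF.sum_of_iIndepFun
    ((hindep.curry hY).comp (fun _ ↦ h) fun _ ↦ hmeas) (s := univ) fun k _ ↦ hblock k
  have hc : ‖B‖₊ ^ 2 / Fintype.card κ =
      ⟨(Fintype.card κ : ℝ)⁻¹ ^ 2, by positivity⟩ * ∑ _k : κ, (‖B - -B‖₊ / 2) ^ 2 := by
    refine NNReal.eq ?_
    -- `const_mul` writes the factor as the subtype element `⟨r ^ 2, _⟩`, which `simp` cannot coerce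
    change _ = (Fintype.card κ : ℝ)⁻¹ ^ 2 * ((∑ _k : κ, (‖B - -B‖₊ / 2) ^ 2 : ℝ≥0) : ℝ)
    obtain hκ | hκ := eq_or_ne (Fintype.card κ : ℝ) 0
    · simp [hκ]
    · simp [← two_mul]
      field_simp
  rw [hc]
  exact hsum.const_mul _

theorem u_statistic_hoeffding_inequality_general
    {Ω : Type*} [MeasurableSpace Ω] (P : Measure Ω) [IsProbabilityMeasure P]
    (n l : ℕ) (hdvd : l ∣ n)
    (X : Fin n → Ω → ℝ) (hXmeas : ∀ i, Measurable (X i))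
    (hindep : iIndepFun X P)
    (h : (Fin l → ℝ) → ℝ) (hmeas : Measurable h)
    (hsym : ∀ (σ : Equiv.Perm (Fin l)) (x : Fin l → ℝ), h (x ∘ σ) = h x)
    (B : ℝ) (hbdd : ∀ x, |h x| ≤ B)
    (hcentered : ∀ J : Finset (Fin n), ∀ hJ : J.card = l,
      ∫ ω, h (fun i => X ((J.orderIsoOfFin hJ i : Fin n)) ω) ∂P = 0)
    (t : ℝ) (ht : 0 < t) :
    (P {ω | t ≤ |(1 / (n.choose l : ℝ)) *
        ∑ J ∈ (Finset.univ.powersetCard l : Finset (Finset (Fin n))).attach,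
          h (fun i => X ((J.1.orderIsoOfFin
            ((Finset.mem_powersetCard.mp J.2).2) i : Fin n)) ω)|}).toReal
      ≤ 2 * Real.exp (-((n : ℝ) / l) * t ^ 2 / (2 * B ^ 2)) := by
  obtain rfl | hn := Nat.eq_zero_or_pos n
  -- for `n = 0` the right-hand side is `2`
  · calc (P _).toReal ≤ 1 := measureReal_le_one
      _ ≤ _ := by simp
  obtain ⟨m, rfl⟩ := hdvd
  obtain ⟨hl, hm⟩ : l ≠ 0 ∧ m ≠ 0 := by simpa [Nat.pos_iff_ne_zero] using hn
  let e : Fin m × Fin l ≃ Fin (l * m) := finProdFinEquiv.trans (finCongr (mul_comm m l))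
  have hcent (f : Fin l → Fin (l * m)) (hf : f.Injective) :
      ∫ ω, h (fun i ↦ X (f i) ω) ∂P = 0 := by
    have hJ : #(univ.map ⟨f, hf⟩) = l := by simp
    rw [← hcentered _ hJ]
    congr 1 with ω
    exact (apply_comp_orderIsoOfFin_eq hsym hJ hf (by simp) (X · ω)).symm
  have hW (σ : Equiv.Perm (Fin (l * m))) :
      HasSubgaussianMGF (fun ω ↦ blockMean h (fun k i ↦ X (σ (e (k, i))) ω))
        (‖B‖₊ ^ 2 / m) P := by
    simpa using hasSubgaussianMGF_blockMean (Y := fun p ↦ X (σ (e p))) (fun _ ↦ hXmeas _)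
      (hindep.precomp (σ.injective.comp e.injective)) hmeas hbdd
      fun k ↦ hcent _ (σ.injective.comp (e.injective.comp (Prod.mk_right_injective k)))
  have hU := HasSubgaussianMGF.sum_mul_of_sum_eq_one (s := univ)
    (w := fun _ ↦ ((l * m)! : ℝ)⁻¹) (fun _ _ ↦ by positivity)
    (by simp [Fintype.card_perm, Nat.factorial_ne_zero]) fun σ _ ↦ hW σ
  change P.real {ω | t ≤ |uStatistic h (X · ω)|} ≤ _
  simp_rw [uStatistic_eq_sum_perm_blockMean hm e hsym]
  refine (hU.measure_abs_ge_le ht.le).trans_eq ?_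
  have hc : ((‖B‖₊ ^ 2 / m : ℝ≥0) : ℝ) = B ^ 2 / m := by simp
  have hnl : ((l * m : ℕ) : ℝ) / l = m := by push_cast; field_simp
  rw [hc, hnl]
  congr 2
  field_simp

/-- Hoeffding-type deviation bound for the U-statistic with a bounded, symmetric,
centered kernel: `P(|U_{n,l}(h)| ≥ t) ≤ 2 exp(−(n/l) t² / (2‖h‖_∞²))`. -/
theorem u_statistic_hoeffding_inequality
    {Ω : Type*} [MeasurableSpace Ω] (P : Measure Ω) [IsProbabilityMeasure P]
    (n l : ℕ) (hl : 0 < l) (hdvd : l ∣ n)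
    (X : Fin n → Ω → ℝ) (hXmeas : ∀ i, Measurable (X i))
    (hindep : iIndepFun X P)
    (hident : ∀ i j : Fin n, Measure.map (X i) P = Measure.map (X j) P)
    (h : (Fin l → ℝ) → ℝ) (hmeas : Measurable h)
    (hsym : ∀ (σ : Equiv.Perm (Fin l)) (x : Fin l → ℝ), h (x ∘ σ) = h x)
    (B : ℝ) (hB : 0 < B) (hbdd : ∀ x, |h x| ≤ B)
    (hcentered : ∀ J : Finset (Fin n), ∀ hJ : J.card = l,
      ∫ ω, h (fun i => X ((J.orderIsoOfFin hJ i : Fin n)) ω) ∂P = 0)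
    (t : ℝ) (ht : 0 < t) :
    (P {ω | t ≤ |(1 / (n.choose l : ℝ)) *
        ∑ J ∈ (Finset.univ.powersetCard l : Finset (Finset (Fin n))).attach,
          h (fun i => X ((J.1.orderIsoOfFin
            ((Finset.mem_powersetCard.mp J.2).2) i : Fin n)) ω)|}).toReal
      ≤ 2 * Real.exp (-((n : ℝ) / l) * t ^ 2 / (2 * B ^ 2)) :=
  u_statistic_hoeffding_inequality_general P n l hdvd X hXmeas hindep h hmeas hsym B hbdd hcentered
    t ht
end

section
/- Let h: ℝ^l → ℝ be symmetric and integrable with respect to P^l, and define the Hoeffding projections h^{(j)}(y_1,…,y_j) = (δ_{y_1} − P)×…×(δ_{y_j} − P)×P^{l−j} h for 1 ≤ j ≤ l. Then E[h^{(j)}(Y_1,…,Y_j) | Y_1,…,Y_{j−1}] = 0 almost surely for j ≥ 1, where Y_1, Y_2, … are i.i.d. with law P; i.e., the kernels h^{(j)} are degenerate. -/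
/-!
Split the subsets of `{1, …, j + 1}` according to whether they contain `j + 1`. Then
`h^{(j+1)}(y, z)` becomes an alternating sum, over `T ⊆ {1, …, j}`, of differences between
the partial integral of `h` with the coordinates `T ∪ {j + 1}` frozen at `(y, z)` and the one
with only `T` frozen at `y`. Since the coordinates of `P^l` are independent, integrating the
first over `z ∼ P` is the same as integrating the `(j + 1)`-st coordinate against `P`, which
gives the second; so every difference integrates to zero.
-/

open MeasureTheory

/-- The `j`-th Hoeffding projection kernel
`h^{(j)}(y_1,…,y_j) = (δ_{y_1} − P) × … × (δ_{y_j} − P) × P^{l−j} h`,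
written via inclusion–exclusion over the subsets `S` of coordinates where the Dirac
component is chosen. -/
noncomputable def hoeffdingProj {l : ℕ} (P : Measure ℝ) (h : (Fin l → ℝ) → ℝ) (j : ℕ) :
    (Fin j → ℝ) → ℝ :=
  fun y => ∑ S ∈ (Finset.univ : Finset (Fin j)).powerset,
    (-1 : ℝ) ^ (j - S.card) *
      ∫ z : Fin l → ℝ,
        h (fun i => if h' : (i : ℕ) < j then
            (if (⟨i, h'⟩ : Fin j) ∈ S then y ⟨i, h'⟩ else z i) else z i)
        ∂(Measure.pi fun _ => P)

open Finset Function

section MeasurePreserving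

variable {α : Type*} [MeasurableSpace α] (μ : Measure α) [IsProbabilityMeasure μ]
  {ι κ : Type*} [Fintype ι] [Fintype κ]

theorem measurePreserving_comp_of_injective {f : ι → κ} (hf : Injective f) :
    MeasurePreserving (fun x : κ → α => x ∘ f) (Measure.pi fun _ => μ)
      (Measure.pi fun _ => μ) := by
  classical
  refine ⟨by fun_prop, (Measure.pi_eq fun s hs => ?_).symm⟩
  set E : κ → Set α := extend f s fun _ => Set.univ
  have hpre : (fun x : κ → α => x ∘ f) ⁻¹' Set.univ.pi s = Set.univ.pi E := by
    ext x
    simp only [Set.mem_preimage, Set.mem_univ_pi, comp_apply]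
    refine ⟨fun hx k => ?_, fun hx i => by simpa [E, hf.extend_apply] using hx (f i)⟩
    by_cases hk : ∃ i, f i = k
    · obtain ⟨i, rfl⟩ := hk
      simpa [E, hf.extend_apply] using hx i
    · simp [E, extend_apply' _ _ _ hk]
  rw [Measure.map_apply (by fun_prop) (MeasurableSet.univ_pi hs), hpre, Measure.pi_pi,
    ← prod_subset (subset_univ (univ.image f)), prod_image hf.injOn]
  · simp [E, hf.extend_apply]
  · intro k _ hk
    simp_all [E, extend_apply']

theorem measurePreserving_sumElim_comp {ι' : Type*} [Fintype ι'] {f : ι → κ ⊕ ι'}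
    (hf : Injective f) :
    MeasurePreserving (fun p : (κ → α) × (ι' → α) => Sum.elim p.1 p.2 ∘ f)
      ((Measure.pi fun _ => μ).prod (Measure.pi fun _ => μ)) (Measure.pi fun _ => μ) :=
  (measurePreserving_comp_of_injective μ hf).comp
    (measurePreserving_sumPiEquivProdPi_symm fun _ => μ)

theorem measurePreserving_update [DecidableEq ι] (i : ι) :
    MeasurePreserving (fun p : α × (ι → α) => update p.2 i p.1)
      (μ.prod (Measure.pi fun _ => μ)) (Measure.pi fun _ => μ) := by
  refine ⟨by fun_prop, (Measure.pi_eq fun s hs => ?_).symm⟩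
  have hpre : (fun p : α × (ι → α) => update p.2 i p.1) ⁻¹' Set.univ.pi s
      = s i ×ˢ Set.univ.pi (update s i Set.univ) := by
    ext ⟨z, w⟩
    simp only [Set.mem_preimage, Set.mem_univ_pi, Set.mem_prod]
    rw [forall_update_iff w fun k a => a ∈ s k, forall_update_iff s fun k t => w k ∈ t]
    simp
  rw [Measure.map_apply (by fun_prop) (MeasurableSet.univ_pi hs), hpre, Measure.prod_prod,
    Measure.pi_pi, ← mul_prod_erase univ _ (mem_univ i), ← mul_prod_erase univ _ (mem_univ i),
    update_self, measure_univ, one_mul]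
  exact congrArg _ (prod_congr rfl fun k hk => by rw [update_of_ne (ne_of_mem_erase hk)])

theorem integral_integral_update {E : Type*} [NormedAddCommGroup E] [NormedSpace ℝ E]
    [DecidableEq ι] {F : (ι → α) → E} (hF : Integrable F (Measure.pi fun _ => μ)) (i : ι) :
    ∫ z, ∫ w, F (update w i z) ∂(Measure.pi fun _ => μ) ∂μ
      = ∫ w, F w ∂(Measure.pi fun _ => μ) := by
  have hu := measurePreserving_update μ i
  rw [integral_integral (f := fun z w => F (update w i z)) (hu.integrable_comp_of_integrable hF),
    ← integral_map hu.measurable.aemeasurable (by rw [hu.map_eq]; exact hF.aestronglyMeasurable),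
    hu.map_eq]

theorem MeasureTheory.Integrable.integral_comp_update {E : Type*} [NormedAddCommGroup E]
    [NormedSpace ℝ E] [DecidableEq ι] {F : (ι → α) → E}
    (hF : Integrable F (Measure.pi fun _ => μ)) (i : ι) :
    Integrable (fun z => ∫ w, F (update w i z) ∂(Measure.pi fun _ => μ)) μ :=
  ((measurePreserving_update μ i).integrable_comp_of_integrable hF).integral_prod_left

end MeasurePreserving

theorem Fin.sum_powerset_univ_succ {M : Type*} [AddCommMonoid M] {n : ℕ}
    (f : Finset (Fin (n + 1)) → M) :
    ∑ S ∈ (univ : Finset (Fin (n + 1))).powerset, f S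
      = ∑ T ∈ (univ : Finset (Fin n)).powerset,
          (f (T.map Fin.castSuccEmb) + f (insert (Fin.last n) (T.map Fin.castSuccEmb))) := by
  have hinj : Set.InjOn (fun T : Finset (Fin n) => T.image Fin.castSuccEmb)
      ((univ : Finset (Fin n)).powerset : Set (Finset (Fin n))) :=
    (image_injective Fin.castSuccEmb.injective).injOn
  rw [Fin.univ_castSuccEmb, cons_eq_insert, sum_powerset_insert (by simp), sum_add_distrib]
  simp only [map_eq_image, powerset_image]
  rw [sum_image hinj, sum_image hinj]

section HoeffdingPoint

variable {α : Type*} {j l : ℕ}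

def hoeffdingPoint (S : Finset (Fin j)) (y : Fin j → α) (w : Fin l → α) : Fin l → α :=
  fun i => if h' : (i : ℕ) < j then (if (⟨i, h'⟩ : Fin j) ∈ S then y ⟨i, h'⟩ else w i) else w i

def hoeffdingSel (S : Finset (Fin j)) : Fin l → Fin j ⊕ Fin l :=
  fun i => if h' : (i : ℕ) < j then (if (⟨i, h'⟩ : Fin j) ∈ S then .inl ⟨i, h'⟩ else .inr i)
    else .inr i

theorem hoeffdingSel_injective (S : Finset (Fin j)) : Injective (hoeffdingSel (l := l) S) := by
  intro a b hab
  simp only [hoeffdingSel] at hab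
  split_ifs at hab <;> simp_all [Fin.ext_iff]

theorem hoeffdingPoint_eq_sumElim_comp (S : Finset (Fin j)) (y : Fin j → α) (w : Fin l → α) :
    hoeffdingPoint S y w = Sum.elim y w ∘ hoeffdingSel S := by
  ext i
  simp only [hoeffdingPoint, hoeffdingSel, comp_apply]
  split_ifs <;> rfl

theorem Fin.castSucc_mem_map_castSuccEmb {n : ℕ} (T : Finset (Fin n)) (k : Fin n) :
    k.castSucc ∈ T.map Fin.castSuccEmb ↔ k ∈ T :=
  mem_map' _

theorem hoeffdingPoint_snoc_map_castSucc (T : Finset (Fin j)) (y : Fin j → α) (z : α)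
    (w : Fin l → α) :
    hoeffdingPoint (T.map Fin.castSuccEmb) (Fin.snoc y z : Fin (j + 1) → α) w
      = hoeffdingPoint T y w := by
  ext i
  simp only [hoeffdingPoint]
  rcases lt_trichotomy (i : ℕ) j with hi | hi | hi
  · have hc : (⟨i, by omega⟩ : Fin (j + 1)) = Fin.castSucc ⟨i, hi⟩ := rfl
    simp only [dif_pos (show (i : ℕ) < j + 1 by omega), dif_pos hi, hc,
      Fin.castSucc_mem_map_castSuccEmb, Fin.snoc_castSucc]
  · have hc : (⟨i, by omega⟩ : Fin (j + 1)) = Fin.last j := Fin.ext hi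
    rw [dif_pos (by omega), dif_neg (by omega), hc, if_neg (by simp)]
  · rw [dif_neg (by omega), dif_neg (by omega)]

theorem hoeffdingPoint_snoc_insert_last (hj : j < l) (T : Finset (Fin j)) (y : Fin j → α)
    (z : α) (w : Fin l → α) :
    hoeffdingPoint (insert (Fin.last j) (T.map Fin.castSuccEmb))
        (Fin.snoc y z : Fin (j + 1) → α) w = hoeffdingPoint T y (update w ⟨j, hj⟩ z) := by
  ext i
  simp only [hoeffdingPoint]
  rcases lt_trichotomy (i : ℕ) j with hi | hi | hi
  · have hc : (⟨i, by omega⟩ : Fin (j + 1)) = Fin.castSucc ⟨i, hi⟩ := rfl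
    simp only [dif_pos (show (i : ℕ) < j + 1 by omega), dif_pos hi, hc, Finset.mem_insert,
      Fin.castSucc_ne_last, false_or, Fin.castSucc_mem_map_castSuccEmb, Fin.snoc_castSucc,
      update_of_ne (show i ≠ ⟨j, hj⟩ by grind)]
  · have hc : (⟨i, by omega⟩ : Fin (j + 1)) = Fin.last j := Fin.ext hi
    rw [dif_pos (by omega), dif_neg (by omega), hc, if_pos (mem_insert_self _ _), Fin.snoc_last,
      show i = ⟨j, hj⟩ from Fin.ext hi, update_self]
  · rw [dif_neg (by omega), dif_neg (by omega), update_of_ne (by grind)]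

theorem measurePreserving_hoeffdingPoint [MeasurableSpace α] (μ : Measure α)
    [IsProbabilityMeasure μ] (S : Finset (Fin j)) :
    MeasurePreserving (fun p : (Fin j → α) × (Fin l → α) => hoeffdingPoint S p.1 p.2)
      ((Measure.pi fun _ => μ).prod (Measure.pi fun _ => μ)) (Measure.pi fun _ => μ) := by
  simpa only [hoeffdingPoint_eq_sumElim_comp] using
    measurePreserving_sumElim_comp μ (hoeffdingSel_injective S)

end HoeffdingPoint

theorem hoeffdingProj_eq_sum_hoeffdingPoint {j l : ℕ} (P : Measure ℝ) (h : (Fin l → ℝ) → ℝ)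
    (y : Fin j → ℝ) :
    hoeffdingProj P h j y = ∑ S ∈ (univ : Finset (Fin j)).powerset,
      (-1 : ℝ) ^ (j - #S) * ∫ w, h (hoeffdingPoint S y w) ∂(Measure.pi fun _ => P) :=
  rfl

theorem hoeffdingProj_snoc {j l : ℕ} (P : Measure ℝ) (h : (Fin l → ℝ) → ℝ) (hj : j < l)
    (y : Fin j → ℝ) (z : ℝ) :
    hoeffdingProj P h (j + 1) (Fin.snoc y z) = ∑ T ∈ (univ : Finset (Fin j)).powerset,
      (-1 : ℝ) ^ (j - #T) *
        (∫ w, h (hoeffdingPoint T y (update w ⟨j, hj⟩ z)) ∂(Measure.pi fun _ => P)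
          - ∫ w, h (hoeffdingPoint T y w) ∂(Measure.pi fun _ => P)) := by
  rw [hoeffdingProj_eq_sum_hoeffdingPoint, Fin.sum_powerset_univ_succ]
  refine sum_congr rfl fun T _ => ?_
  have hT : #T ≤ j := (card_le_univ T).trans_eq (Fintype.card_fin j)
  simp only [hoeffdingPoint_snoc_map_castSucc, hoeffdingPoint_snoc_insert_last hj,
    card_insert_of_notMem (show Fin.last j ∉ T.map Fin.castSuccEmb by simp), card_map]
  rw [show j + 1 - #T = j - #T + 1 by omega, show j + 1 - (#T + 1) = j - #T by omega, pow_succ]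
  ring

theorem hoeffdingProj_degenerate_general
    (P : Measure ℝ) [IsProbabilityMeasure P]
    (l : ℕ) (h : (Fin l → ℝ) → ℝ)
    (hint : Integrable h (Measure.pi fun _ : Fin l => P))
    (j : ℕ) (hj : j + 1 ≤ l) :
    ∀ᵐ y ∂(Measure.pi fun _ : Fin j => P),
      ∫ z, hoeffdingProj P h (j + 1) (Fin.snoc y z) ∂P = 0 := by
  have hsection : ∀ᵐ y ∂(Measure.pi fun _ : Fin j => P), ∀ T : Finset (Fin j),
      Integrable (fun w => h (hoeffdingPoint T y w)) (Measure.pi fun _ : Fin l => P) :=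
    ae_all_iff.2 fun T =>
      ((measurePreserving_hoeffdingPoint P T).integrable_comp_of_integrable hint).prod_right_ae
  filter_upwards [hsection] with y hy
  simp_rw [hoeffdingProj_snoc P h hj y]
  rw [integral_finsetSum _ fun T _ => ?_]
  · refine sum_eq_zero fun T _ => ?_
    rw [integral_const_mul, integral_sub ((hy T).integral_comp_update P _) (integrable_const _),
      integral_integral_update P (hy T), integral_const, probReal_univ, one_smul, sub_self,
      mul_zero]
  · exact (((hy T).integral_comp_update P _).sub (integrable_const _)).const_mul _

/-- Degeneracy of the Hoeffding projection kernels: for `1 ≤ j ≤ l`, the conditional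
expectation of `h^{(j)}(Y_1,…,Y_j)` given `Y_1,…,Y_{j−1}` vanishes almost surely, i.e.,
for `P^{j-1}`-a.e. `(y_1,…,y_{j−1})`, integrating out the last argument gives `0`. -/
theorem hoeffdingProj_degenerate
    (P : Measure ℝ) [IsProbabilityMeasure P]
    (l : ℕ) (h : (Fin l → ℝ) → ℝ) (hmeas : Measurable h)
    (hint : Integrable h (Measure.pi fun _ : Fin l => P))
    (hsym : ∀ (σ : Equiv.Perm (Fin l)) (x : Fin l → ℝ), h (x ∘ σ) = h x)
    (j : ℕ) (hj : j + 1 ≤ l) :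
    ∀ᵐ y ∂(Measure.pi fun _ : Fin j => P),
      ∫ z, hoeffdingProj P h (j + 1) (Fin.snoc y z) ∂P = 0 :=
  hoeffdingProj_degenerate_general P l h hint j hj
end

section
/- Hoeffding decomposition: for a symmetric kernel h ∈ L¹(P^l) and i.i.d. Y_1,…,Y_n with law P (n ≥ l), the centered U-statistic satisfies U_{n,l}(h) − E h = Σ_{j=1}^{l} [C(l,j)/C(n,j)] Σ_{J ⊆ [n], |J|=j} h^{(j)}(Y_i, i ∈ J), where h^{(j)} are the degenerate Hoeffding projection kernels. -/
/-!
For a sample `y` and a set `T` of sample indices, let `g(T)` be the integral of `h` with the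
points `y_t, t ∈ T`, plugged into `|T|` of its arguments and the others integrated against `P`;
by symmetry of `h` this does not depend on which arguments receive them. Expanding the signed
measure `(δ_{y_1} − P) × … × (δ_{y_j} − P)` shows that `h^{(j)}(y_S)` is the Möbius transform
`∑_{T ⊆ S} (-1)^{|S|-|T|} g(T)` on the subset lattice, so Möbius inversion gives
`h(y_J) = g(J) = ∑_{S ⊆ J} h^{(|S|)}(y_S)`. Averaging over `|J| = l`, a set `S` with `|S| = j`
lies in `C(n-j, l-j)` of the `J`, and `C(n-j, l-j) / C(n, l) = C(l, j) / C(n, j)`; the term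
`j = 0` is `g(∅) = E h`.
-/

open MeasureTheory Finset

theorem Nat.cast_choose_sub_div_choose {𝕜 : Type*} [Field 𝕜] [CharZero 𝕜] {n l j : ℕ}
    (hjl : j ≤ l) (hln : l ≤ n) :
    ((n - j).choose (l - j) : 𝕜) / n.choose l = l.choose j / n.choose j := by
  have hchoose : (n.choose l : 𝕜) * l.choose j = n.choose j * (n - j).choose (l - j) := by
    exact_mod_cast Nat.choose_mul hjl
  have hnl : (n.choose l : 𝕜) ≠ 0 := by exact_mod_cast (Nat.choose_pos hln).ne'
  have hnj : (n.choose j : 𝕜) ≠ 0 := by exact_mod_cast (Nat.choose_pos (hjl.trans hln)).ne'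
  rw [div_eq_div_iff hnl hnj]
  linear_combination -hchoose

namespace Finset

variable {α : Type*}

theorem sum_powerset_map {β M : Type*} [AddCommMonoid M] (f : α ↪ β) (s : Finset α)
    (g : Finset β → M) :
    ∑ T ∈ (s.map f).powerset, g T = ∑ S ∈ s.powerset, g (S.map f) := by
  have : (s.map f).powerset = s.powerset.map (mapEmbedding f).toEmbedding := by
    ext T
    simp only [mem_powerset, mem_map, RelEmbedding.coe_toEmbedding, mapEmbedding_apply,
      subset_map_iff]
    exact ⟨fun ⟨S, hS, hT⟩ => ⟨S, hS, hT.symm⟩, fun ⟨S, hS, hT⟩ => ⟨S, hS, hT.symm⟩⟩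
  rw [this, sum_map]
  rfl

theorem sum_powersetCard_sum_powersetCard [DecidableEq α] {M : Type*} [AddCommMonoid M]
    (s : Finset α) {j l : ℕ} (hjl : j ≤ l) (f : Finset α → M) :
    ∑ J ∈ s.powersetCard l, ∑ S ∈ J.powersetCard j, f S
      = (#s - j).choose (l - j) • ∑ S ∈ s.powersetCard j, f S := by
  rw [sum_comm' (t' := s.powersetCard j) (s' := fun S => (s.powersetCard l).filter (S ⊆ ·))
    fun J S => by
      simp only [mem_powersetCard, mem_filter]
      exact ⟨fun h => ⟨⟨h.1, h.2.1⟩, h.2.1.trans h.1.1, h.2.2⟩,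
        fun h => ⟨h.1.1, h.1.2, h.2.2⟩⟩, smul_sum]
  refine sum_congr rfl fun S hS => ?_
  obtain ⟨hSs, hSj⟩ := mem_powersetCard.mp hS
  rw [sum_const, card_filter_powersetCard_subset S s l hSs (hSj ▸ hjl), hSj]

theorem sum_Icc_neg_one_pow_card_sub [DecidableEq α] {R : Type*} [CommRing R]
    {T J : Finset α} (hTJ : T ⊆ J) :
    ∑ S ∈ Icc T J, (-1 : R) ^ (#S - #T) = if T = J then 1 else 0 := by
  have hdisj : ∀ U ∈ (J \ T).powerset, Disjoint T U := fun U hU =>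
    (disjoint_of_subset_left (mem_powerset.mp hU) sdiff_disjoint).symm
  have hinj : Set.InjOn (T ∪ ·) ↑(J \ T).powerset := fun U hU U' hU' hUU' => by
    simpa [union_sdiff_cancel_left (hdisj U hU), union_sdiff_cancel_left (hdisj U' hU')] using
      congrArg (· \ T) hUU'
  rw [Icc_eq_image_powerset hTJ, sum_image hinj]
  rw [sum_congr rfl fun U hU => by
    rw [card_union_of_disjoint (hdisj U hU), Nat.add_sub_cancel_left]]
  have := congrArg (Int.cast : ℤ → R) (sum_powerset_neg_one_pow_card (x := J \ T))
  push_cast at this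
  rw [this]
  exact if_congr (sdiff_eq_empty_iff_subset.trans ⟨subset_antisymm hTJ, fun h => h ▸ subset_rfl⟩)
    rfl rfl

def subsetMoebius {R : Type*} [CommRing R] (a : Finset α → R) (S : Finset α) : R :=
  ∑ T ∈ S.powerset, (-1) ^ (#S - #T) * a T

theorem sum_powerset_subsetMoebius [DecidableEq α] {R : Type*} [CommRing R]
    (a : Finset α → R) (J : Finset α) :
    ∑ S ∈ J.powerset, subsetMoebius a S = a J := by
  unfold subsetMoebius
  rw [sum_comm' (t' := J.powerset) (s' := fun T => Icc T J) fun S T => by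
    simp only [mem_powerset, mem_Icc]
    exact ⟨fun h => ⟨⟨h.2, h.1⟩, h.2.trans h.1⟩, fun h => ⟨h.1.2, h.1.1⟩⟩]
  calc ∑ T ∈ J.powerset, ∑ S ∈ Icc T J, (-1 : R) ^ (#S - #T) * a T
      = ∑ T ∈ J.powerset, (if T = J then 1 else 0) * a T := sum_congr rfl fun T hT => by
        rw [← sum_mul, sum_Icc_neg_one_pow_card_sub (mem_powerset.mp hT)]
    _ = a J := by simp

theorem sum_powersetCard_eq_sum_subsetMoebius [DecidableEq α] {𝕜 : Type*} [Field 𝕜]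
    [CharZero 𝕜] (s : Finset α) {l : ℕ} (hls : l ≤ #s) (a : Finset α → 𝕜) :
    (1 / ((#s).choose l : 𝕜)) * ∑ J ∈ s.powersetCard l, a J
      = ∑ j ∈ range (l + 1),
          ((l.choose j : 𝕜) / (#s).choose j) * ∑ S ∈ s.powersetCard j, subsetMoebius a S := by
  calc (1 / ((#s).choose l : 𝕜)) * ∑ J ∈ s.powersetCard l, a J
      = (1 / ((#s).choose l : 𝕜)) * ∑ J ∈ s.powersetCard l,
          ∑ j ∈ range (l + 1), ∑ S ∈ J.powersetCard j, subsetMoebius a S := by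
        refine congrArg _ (sum_congr rfl fun J hJ => ?_)
        rw [← sum_powerset_subsetMoebius a J, sum_powerset, (mem_powersetCard.mp hJ).2]
    _ = (1 / ((#s).choose l : 𝕜)) * ∑ j ∈ range (l + 1),
          (#s - j).choose (l - j) • ∑ S ∈ s.powersetCard j, subsetMoebius a S := by
        rw [sum_comm]
        exact congrArg _ (sum_congr rfl fun j hj =>
          sum_powersetCard_sum_powersetCard s (Nat.lt_succ_iff.mp (mem_range.mp hj)) _)
    _ = _ := by
        rw [mul_sum]
        refine sum_congr rfl fun j hj => ?_
        rw [← Nat.cast_choose_sub_div_choose (Nat.lt_succ_iff.mp (mem_range.mp hj)) hls,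
          nsmul_eq_mul]
        ring

theorem sum_Icc_sum_subsetMoebius [DecidableEq α] {𝕜 : Type*} [Field 𝕜] [CharZero 𝕜]
    (s : Finset α) {l : ℕ} (hls : l ≤ #s) (a : Finset α → 𝕜) :
    ∑ j ∈ Icc 1 l,
        ((l.choose j : 𝕜) / (#s).choose j) * ∑ S ∈ s.powersetCard j, subsetMoebius a S
      = (1 / ((#s).choose l : 𝕜)) * ∑ J ∈ s.powersetCard l, a J - a ∅ := by
  have hrange : range (l + 1) = insert 0 (Icc 1 l) := by
    ext j
    simp only [mem_range, mem_insert, mem_Icc]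
    omega
  rw [sum_powersetCard_eq_sum_subsetMoebius s hls, hrange, sum_insert (by simp)]
  simp [subsetMoebius]

end Finset

theorem MeasureTheory.integral_pi_comp_perm {κ β E : Type*} [Fintype κ] [MeasurableSpace β]
    [NormedAddCommGroup E] [NormedSpace ℝ E] (μ : Measure β) [SigmaFinite μ]
    (σ : Equiv.Perm κ) (F : (κ → β) → E) :
    ∫ z, F (z ∘ σ) ∂Measure.pi (fun _ => μ) = ∫ z, F z ∂Measure.pi (fun _ => μ) := by
  have hσ : ∀ z : κ → β, MeasurableEquiv.piCongrLeft (fun _ => β) σ.symm z = z ∘ σ := fun z => by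
    funext k
    simpa using MeasurableEquiv.piCongrLeft_apply_apply (β := fun _ => β) σ.symm z (σ k)
  simpa only [hσ] using (measurePreserving_piCongrLeft (fun _ : κ => μ) σ.symm).integral_comp' F

section PartialExpectation

variable {κ β : Type*} [Fintype κ] [MeasurableSpace β] (μ : Measure β) (h : (κ → β) → ℝ)

/-- `Function.extend f u z` is `u ∘ f⁻¹` on the range of `f` and `z` off it: the arguments
`f i` of `h` are fixed to `u i` and the others are integrated out. -/
noncomputable def partialExpectation {ι : Type*} (f : ι → κ) (u : ι → β) : ℝ :=
  ∫ z, h (Function.extend f u z) ∂Measure.pi (fun _ => μ)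

theorem partialExpectation_congr [SigmaFinite μ]
    (hsym : ∀ (σ : Equiv.Perm κ) (x : κ → β), h (x ∘ σ) = h x) {ι ι' : Type*}
    {f : ι → κ} {f' : ι' → κ} (hf : f.Injective) (hf' : f'.Injective) (e : ι ≃ ι')
    {u : ι → β} {u' : ι' → β} (hu : ∀ i, u' (e i) = u i) :
    partialExpectation μ h f u = partialExpectation μ h f' u' := by
  have : Finite ι := .of_injective f hf
  obtain ⟨σ, hσ⟩ := Equiv.Perm.exists_extending_pair f (f' ∘ e) hf (hf'.comp e.injective)
  have hext : ∀ z, Function.extend f' u' z ∘ σ = Function.extend f u (z ∘ σ) := fun z => by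
    funext k
    by_cases hk : ∃ i, f i = k
    · obtain ⟨i, rfl⟩ := hk
      simp [hσ, hf.extend_apply, hf'.extend_apply, hu]
    · have hk' : ¬∃ i', f' i' = σ k := by
        rintro ⟨i', hi'⟩
        refine hk ⟨e.symm i', σ.injective ?_⟩
        simp [hσ, hi']
      simp [Function.extend_apply' _ _ _ hk, Function.extend_apply' _ _ _ hk']
  calc partialExpectation μ h f u
      = ∫ z, h (Function.extend f u (z ∘ σ)) ∂Measure.pi (fun _ => μ) :=
        (integral_pi_comp_perm μ σ _).symm
    _ = partialExpectation μ h f' u' := by simp_rw [← hext, hsym]; rfl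

theorem partialExpectation_of_isEmpty {ι : Type*} [IsEmpty ι] (f : ι → κ) (u : ι → β) :
    partialExpectation μ h f u = ∫ z, h z ∂Measure.pi (fun _ => μ) := by
  have hext : ∀ z, Function.extend f u z = z := fun z =>
    funext fun k => Function.extend_apply' _ _ _ fun ⟨i, _⟩ => isEmptyElim i
  simp only [partialExpectation, hext]

theorem partialExpectation_equiv [IsProbabilityMeasure μ] {ι : Type*} (e : ι ≃ κ) (u : ι → β) :
    partialExpectation μ h e u = h (u ∘ e.symm) := by
  have hext : ∀ z, Function.extend e u z = u ∘ e.symm := fun z => by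
    funext k
    rw [← e.apply_symm_apply k, e.injective.extend_apply]
    simp
  simp [partialExpectation, hext]

open Classical in
/-- The `g(T)` of the proof sketch; the value `0` when `T` does not inject into `κ` is junk. -/
noncomputable def subsetMean {ι : Type*} (y : ι → β) (T : Finset ι) : ℝ :=
  if hT : Nonempty (T ↪ κ) then partialExpectation μ h hT.some (fun t => y t) else 0

variable {μ h}

theorem subsetMean_eq [SigmaFinite μ] (hsym : ∀ (σ : Equiv.Perm κ) (x : κ → β), h (x ∘ σ) = h x)
    {ι ι' : Type*} (y : ι → β) {T : Finset ι} {f : ι' → κ} (hf : f.Injective) (e : ι' ≃ T) :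
    subsetMean μ h y T = partialExpectation μ h f (fun i => y (e i)) := by
  have hT : Nonempty (T ↪ κ) := ⟨⟨f ∘ e.symm, hf.comp e.symm.injective⟩⟩
  rw [subsetMean, dif_pos hT]
  exact partialExpectation_congr μ h hsym hT.some.injective hf e.symm (by simp)

theorem subsetMean_empty {ι : Type*} (y : ι → β) :
    subsetMean μ h y ∅ = ∫ z, h z ∂Measure.pi (fun _ => μ) := by
  rw [subsetMean, dif_pos ⟨⟨isEmptyElim, fun a => isEmptyElim a⟩⟩, partialExpectation_of_isEmpty]

end PartialExpectation

theorem subsetMean_of_card_eq {β ι : Type*} [MeasurableSpace β] [LinearOrder ι] {μ : Measure β}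
    [IsProbabilityMeasure μ] {l : ℕ} {h : (Fin l → β) → ℝ}
    (hsym : ∀ (σ : Equiv.Perm (Fin l)) (x : Fin l → β), h (x ∘ σ) = h x)
    (y : ι → β) {J : Finset ι} (hJ : #J = l) :
    subsetMean μ h y J = h (fun i => y (J.orderIsoOfFin hJ i)) := by
  rw [subsetMean_eq hsym y (J.orderIsoOfFin hJ).symm.toEquiv.injective (Equiv.refl _),
    partialExpectation_equiv]
  rfl

theorem hoeffdingProj_comp_embedding {P : Measure ℝ} [SigmaFinite P] {l : ℕ}
    {h : (Fin l → ℝ) → ℝ} (hsym : ∀ (σ : Equiv.Perm (Fin l)) (x : Fin l → ℝ), h (x ∘ σ) = h x)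
    {ι : Type*} (y : ι → ℝ) {j : ℕ} (hjl : j ≤ l) (φ : Fin j ↪ ι) :
    hoeffdingProj P h j (y ∘ φ) = subsetMoebius (subsetMean P h y) (univ.map φ) := by
  unfold hoeffdingProj subsetMoebius
  rw [sum_powerset_map, card_map, card_univ, Fintype.card_fin]
  refine sum_congr rfl fun S _ => ?_
  have hf : (fun s : S => Fin.castLE hjl s).Injective :=
    (Fin.castLE_injective hjl).comp Subtype.val_injective
  rw [card_map, subsetMean_eq hsym y hf (S.equivMap φ)]
  refine congrArg _ (integral_congr_ae (.of_forall fun z => congrArg h (funext fun i => ?_)))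
  by_cases hi : ∃ s : S, Fin.castLE hjl s = i
  · obtain ⟨s, rfl⟩ := hi
    simp [hf.extend_apply]
  · rw [Function.extend_apply' _ _ _ hi]
    split_ifs with hij hiS
    · exact absurd ⟨⟨⟨i, hij⟩, hiS⟩, rfl⟩ hi
    all_goals rfl

theorem hoeffding_decomposition_general
    (P : Measure ℝ) [IsProbabilityMeasure P]
    (n l : ℕ) (hln : l ≤ n)
    (h : (Fin l → ℝ) → ℝ)
    (hsym : ∀ (σ : Equiv.Perm (Fin l)) (x : Fin l → ℝ), h (x ∘ σ) = h x) :
    ∀ᵐ y ∂(Measure.pi fun _ : Fin n => P),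
      (1 / (n.choose l : ℝ)) *
          ∑ J ∈ (Finset.univ.powersetCard l : Finset (Finset (Fin n))).attach,
            h (fun i => y ((J.1.orderIsoOfFin
              ((Finset.mem_powersetCard.mp J.2).2) i : Fin n)))
        - ∫ x, h x ∂(Measure.pi fun _ : Fin l => P)
      = ∑ j ∈ Finset.Icc 1 l,
          ((l.choose j : ℝ) / (n.choose j : ℝ)) *
            ∑ J ∈ (Finset.univ.powersetCard j : Finset (Finset (Fin n))).attach,
              hoeffdingProj P h j
                (fun i => y ((J.1.orderIsoOfFin
                  ((Finset.mem_powersetCard.mp J.2).2) i : Fin n))) := by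
  refine ae_of_all _ fun y => ?_
  have hU : ∑ J ∈ (univ.powersetCard l : Finset (Finset (Fin n))).attach,
      h (fun i => y (J.1.orderIsoOfFin (mem_powersetCard.mp J.2).2 i))
        = ∑ J ∈ univ.powersetCard l, subsetMean P h y J := by
    rw [← sum_attach _ (subsetMean P h y)]
    exact sum_congr rfl fun J _ => (subsetMean_of_card_eq hsym y _).symm
  have hproj : ∀ j ≤ l, ∑ J ∈ (univ.powersetCard j : Finset (Finset (Fin n))).attach,
      hoeffdingProj P h j (fun i => y (J.1.orderIsoOfFin (mem_powersetCard.mp J.2).2 i))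
        = ∑ S ∈ univ.powersetCard j, subsetMoebius (subsetMean P h y) S := fun j hjl => by
    rw [← sum_attach _ (subsetMoebius (subsetMean P h y))]
    refine sum_congr rfl fun J _ => ?_
    have hJ := (mem_powersetCard.mp J.2).2
    have := hoeffdingProj_comp_embedding (P := P) hsym y hjl (J.1.orderEmbOfFin hJ).toEmbedding
    rwa [map_orderEmbOfFin_univ] at this
  have hcomb := sum_Icc_sum_subsetMoebius univ (card_fin n ▸ hln) (subsetMean P h y)
  rw [card_fin] at hcomb
  rw [hU, ← subsetMean_empty y, ← hcomb]
  exact sum_congr rfl fun j hj => by rw [hproj j (mem_Icc.mp hj).2]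

/-- Hoeffding decomposition of the U-statistic: for `P^n`-a.e. `y`,
`U_{n,l}(h)(y) − E h = Σ_{j=1}^{l} [C(l,j)/C(n,j)] Σ_{|J|=j} h^{(j)}(y_i, i ∈ J)`. -/
theorem hoeffding_decomposition
    (P : Measure ℝ) [IsProbabilityMeasure P]
    (n l : ℕ) (hl : 0 < l) (hln : l ≤ n)
    (h : (Fin l → ℝ) → ℝ) (hmeas : Measurable h)
    (hint : Integrable h (Measure.pi fun _ : Fin l => P))
    (hsym : ∀ (σ : Equiv.Perm (Fin l)) (x : Fin l → ℝ), h (x ∘ σ) = h x) :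
    ∀ᵐ y ∂(Measure.pi fun _ : Fin n => P),
      (1 / (n.choose l : ℝ)) *
          ∑ J ∈ (Finset.univ.powersetCard l : Finset (Finset (Fin n))).attach,
            h (fun i => y ((J.1.orderIsoOfFin
              ((Finset.mem_powersetCard.mp J.2).2) i : Fin n)))
        - ∫ x, h x ∂(Measure.pi fun _ : Fin l => P)
      = ∑ j ∈ Finset.Icc 1 l,
          ((l.choose j : ℝ) / (n.choose j : ℝ)) *
            ∑ J ∈ (Finset.univ.powersetCard j : Finset (Finset (Fin n))).attach,
              hoeffdingProj P h j
                (fun i => y ((J.1.orderIsoOfFin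
                  ((Finset.mem_powersetCard.mp J.2).2) i : Fin n))) :=
  hoeffding_decomposition_general P n l hln h hsym
end

section
/- Suppose for each j with 2 ≤ j ≤ l, a random variable T_j satisfies P(|T_j| ≥ s_j) ≤ exp(−c·min((t ε²)^{1/j}(n/l)^{(j−1)/j}, (tε²/B²)^{1/(j+1)}(nj/l²)^{j/(j+1)})) for constants c, B > 0. If l·log²(l) ≪ n/l, ε ≫ log^{−1/2}(l), and t < (n/l²)·ε⁴, then Σ_{j=2}^l P(|T_j| ≥ s_j) ≤ exp(−c₂ t/ε) for some constant c₂ > 0 and all l large enough. -/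
/-!
The exponent `min(A_j, B_j)` of the `j`-th tail bound is a minimum of two weighted geometric
means `a^{1/m} b^{(m-1)/m}` (with `m = j` resp. `m = j + 1`). Once `y ≤ b`, an inequality
`y^k ≤ a b^{k-1}` persists for every `m ≥ k`, so it is enough to check `k = 2` for `A_j` and
`k = 3` for `B_j`. Under the growth assumptions both `t/(max(1,B) ε)` and `2 log l / c` pass
this test, hence `c · min(A_j, B_j) ≥ c₂ t/ε + log l` with `c₂ = c/(2 max(1,B))`. Each
of the fewer than `l` terms is then at most `exp(-c₂ t/ε)/l`.
-/

open MeasureTheory Filter Finset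

lemma rpow_one_div_mul_rpow_sub_one_div_pow {a b : ℝ} (ha : 0 ≤ a) (hb : 0 ≤ b) {j : ℕ}
    (hj : 1 ≤ j) : (a ^ ((1 : ℝ) / j) * b ^ (((j : ℝ) - 1) / j)) ^ j = a * b ^ (j - 1) := by
  have hj0 : (j : ℝ) ≠ 0 := by positivity
  rw [mul_pow, ← Real.rpow_natCast, ← Real.rpow_natCast (b ^ _), ← Real.rpow_mul ha,
    ← Real.rpow_mul hb, one_div_mul_cancel hj0, div_mul_cancel₀ _ hj0, Real.rpow_one,
    ← Nat.cast_one, ← Nat.cast_sub hj, Real.rpow_natCast]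

lemma le_rpow_one_div_mul_rpow_of_pow_le {a b y : ℝ} {k j : ℕ} (ha : 0 ≤ a) (hy : 0 ≤ y)
    (hyb : y ≤ b) (hk : 1 ≤ k) (hkj : k ≤ j) (h : y ^ k ≤ a * b ^ (k - 1)) :
    y ≤ a ^ ((1 : ℝ) / j) * b ^ (((j : ℝ) - 1) / j) := by
  have hb : 0 ≤ b := hy.trans hyb
  refine le_of_pow_le_pow_left₀ (by omega : j ≠ 0) (by positivity) ?_
  rw [rpow_one_div_mul_rpow_sub_one_div_pow ha hb (hk.trans hkj)]
  calc y ^ j = y ^ k * y ^ (j - k) := by rw [← pow_add, Nat.add_sub_cancel' hkj]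
    _ ≤ a * b ^ (k - 1) * b ^ (j - k) := by gcongr
    _ = a * b ^ (j - 1) := by rw [mul_assoc, ← pow_add]; congr 2; omega

lemma le_rpow_one_div_succ_mul_rpow_of_pow_le {a b y : ℝ} {k j : ℕ} (ha : 0 ≤ a)
    (hy : 0 ≤ y) (hyb : y ≤ b) (hk : 1 ≤ k) (hkj : k ≤ j + 1)
    (h : y ^ k ≤ a * b ^ (k - 1)) :
    y ≤ a ^ ((1 : ℝ) / (j + 1)) * b ^ ((j : ℝ) / (j + 1)) := by
  simpa using le_rpow_one_div_mul_rpow_of_pow_le ha hy hyb hk hkj h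

lemma sum_Icc_le_of_le_div {f : ℕ → ℝ} {E : ℝ} {a m : ℕ} (ha : 1 ≤ a) (hE : 0 ≤ E)
    (hf : ∀ j ∈ Icc a m, f j ≤ E / m) : ∑ j ∈ Icc a m, f j ≤ E := by
  calc ∑ j ∈ Icc a m, f j ≤ #(Icc a m) • (E / m) := sum_le_card_nsmul _ _ _ hf
    _ ≤ (m : ℝ) * (E / m) := by
        rw [nsmul_eq_mul, Nat.card_Icc]
        gcongr
        exact_mod_cast (by omega : m + 1 - a ≤ m)
    _ ≤ E := by
        rcases (Nat.cast_nonneg m : (0 : ℝ) ≤ m).eq_or_lt with hm | hm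
        · simp [← hm, hE]
        · rw [mul_div_cancel₀ _ hm.ne']

lemma exp_neg_le_exp_neg_div {a z L : ℝ} (hL : 0 < L) (h : a + Real.log L ≤ z) :
    Real.exp (-z) ≤ Real.exp (-a) / L := by
  calc Real.exp (-z) ≤ Real.exp (-a + -Real.log L) := Real.exp_le_exp.mpr (by linarith)
    _ = Real.exp (-a) / L := by
      rw [Real.exp_add, Real.exp_neg (Real.log L), Real.exp_log hL, div_eq_mul_inv]

lemma div_eq_mul_div_sq {N L : ℝ} (hL : L ≠ 0) : N / L = L * (N / L ^ 2) := by
  field_simp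

lemma two_mul_div_sq_le_div {N L : ℝ} (hL : 2 ≤ L) (hN : 0 ≤ N / L ^ 2) :
    2 * (N / L ^ 2) ≤ N / L := by
  rw [div_eq_mul_div_sq (by positivity : L ≠ 0)]
  exact mul_le_mul_of_nonneg_right hL hN

/-- The exponent of the `j`-th tail bound, with `x = t ε²`, `N = n` and `L = l`. -/
noncomputable def tailExponent (x N L B : ℝ) (j : ℕ) : ℝ :=
  min (x ^ ((1 : ℝ) / j) * (N / L) ^ (((j : ℝ) - 1) / j))
    ((x / B ^ 2) ^ ((1 : ℝ) / (j + 1)) * ((N * j) / L ^ 2) ^ ((j : ℝ) / (j + 1)))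

lemma le_tailExponent {x N L B y : ℝ} {j : ℕ} (hj : 2 ≤ j) (hx : 0 ≤ x) (hL : 2 ≤ L)
    (hy : 0 ≤ y) (h₁ : y ≤ 2 * (N / L ^ 2)) (h₂ : y ^ 2 ≤ x * (N / L))
    (h₃ : y ^ 3 ≤ x / B ^ 2 * (2 * (N / L ^ 2)) ^ 2) : y ≤ tailExponent x N L B j := by
  have hV : 0 ≤ N / L ^ 2 := by linarith
  have hVL := two_mul_div_sq_le_div hL hV
  have hVj : 2 * (N / L ^ 2) ≤ N * j / L ^ 2 :=
    calc 2 * (N / L ^ 2) ≤ j * (N / L ^ 2) :=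
          mul_le_mul_of_nonneg_right (by exact_mod_cast hj) hV
      _ = N * j / L ^ 2 := by ring
  refine le_min (le_rpow_one_div_mul_rpow_of_pow_le hx hy (h₁.trans hVL) one_le_two hj
    (by simpa using h₂)) (le_rpow_one_div_succ_mul_rpow_of_pow_le (by positivity) hy
    (h₁.trans hVj) (by norm_num : 1 ≤ 3) (by omega) (h₃.trans ?_))
  gcongr

lemma div_le_tailExponent {t e N L B : ℝ} {j : ℕ} (hj : 2 ≤ j) (he : 0 < e) (he1 : e ≤ 1)
    (ht : 0 < t) (hL : 2 ≤ L) (hB : 0 < B) (htN : t < N / L ^ 2 * e ^ 4) :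
    t / (max 1 B * e) ≤ tailExponent (t * e ^ 2) N L B j := by
  set M := max 1 B
  set V := N / L ^ 2
  have hM : 1 ≤ M := le_max_left 1 B
  have htV : t / e ^ 4 ≤ V := (div_le_iff₀ (by positivity)).mpr htN.le
  have hV : 0 ≤ V := le_trans (by positivity) htV
  have hy : t / (M * e) ≤ t / e :=
    div_le_div_of_nonneg_left ht.le he (le_mul_of_one_le_left he.le hM)
  have hVL : V ≤ N / L := by linarith [two_mul_div_sq_le_div hL hV]
  refine le_tailExponent hj (by positivity) hL (by positivity) ?_ ?_ ?_
  · calc t / (M * e) ≤ t / e := hy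
      _ ≤ t / e ^ 4 :=
          div_le_div_of_nonneg_left ht.le (by positivity) (pow_le_of_le_one he.le he1 (by norm_num))
      _ ≤ 2 * V := by linarith
  · calc (t / (M * e)) ^ 2 ≤ (t / e) ^ 2 := by gcongr
      _ = t * e ^ 2 * (t / e ^ 4) := by field_simp
      _ ≤ t * e ^ 2 * (N / L) := mul_le_mul_of_nonneg_left (htV.trans hVL) (by positivity)
  · calc (t / (M * e)) ^ 3 = t ^ 3 / (M ^ 3 * e ^ 3) := by ring
      _ ≤ t ^ 3 / (B ^ 2 * e ^ 6) := by
        refine div_le_div_of_nonneg_left (by positivity) (by positivity) (mul_le_mul ?_ ?_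
          (by positivity) (by positivity))
        · calc B ^ 2 ≤ M ^ 2 := pow_le_pow_left₀ hB.le (le_max_right 1 B) 2
            _ ≤ M ^ 3 := pow_le_pow_right₀ hM (by norm_num)
        · exact pow_le_pow_of_le_one he.le he1 (by norm_num)
      _ = t * e ^ 2 / B ^ 2 * (t / e ^ 4) ^ 2 := by field_simp
      _ ≤ t * e ^ 2 / B ^ 2 * (2 * V) ^ 2 := by gcongr; linarith

lemma two_mul_log_div_le_tailExponent {t e N L B c K : ℝ} {j : ℕ} (hj : 2 ≤ j) (hc : 0 < c)
    (hB : 0 < B) (ht : 2 ≤ t) (hL : 2 ≤ L) (hlog : 1 ≤ Real.log L)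
    (helog : 1 ≤ e ^ 2 * Real.log L) (hK : 1 / c + 2 / c ^ 2 + B ^ 2 / c ^ 3 + 1 ≤ K)
    (hN : K * Real.log L ^ 2 ≤ N / L ^ 2) :
    2 * Real.log L / c ≤ tailExponent (t * e ^ 2) N L B j := by
  set V := N / L ^ 2
  set lg := Real.log L
  have hc₁ : 0 < 1 / c := by positivity
  have hc₂ : 0 < 2 / c ^ 2 := by positivity
  have hc₃ : 0 ≤ B ^ 2 / c ^ 3 := by positivity
  have hK0 : 0 ≤ K := by linarith
  have hK₁ : 1 / c ≤ K := by linarith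
  have hK₂ : 2 / c ^ 2 ≤ K := by linarith
  have hK₃ : B ^ 2 / c ^ 3 ≤ K ^ 2 :=
    (show B ^ 2 / c ^ 3 ≤ K by linarith).trans (le_self_pow₀ (by linarith) two_ne_zero)
  have hlg0 : 0 ≤ lg := by linarith
  have hV : 0 ≤ V := le_trans (by positivity) hN
  have hlgL : lg ≤ L := by linarith [Real.log_le_sub_one_of_pos (show 0 < L by positivity)]
  refine le_tailExponent hj (by positivity) hL (div_nonneg (by linarith) hc.le) ?_ ?_ ?_
  · calc 2 * lg / c = 2 * (1 / c * lg) := by ring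
      _ ≤ 2 * (K * lg ^ 2) := by gcongr; exact le_self_pow₀ hlog two_ne_zero
      _ ≤ 2 * V := by gcongr
  · calc (2 * lg / c) ^ 2 = 2 * (2 / c ^ 2 * lg ^ 2) := by ring
      _ ≤ 2 * V := by gcongr; exact (mul_le_mul_of_nonneg_right hK₂ (sq_nonneg lg)).trans hN
      _ ≤ 2 * ((e ^ 2 * lg) * V) := by gcongr; exact le_mul_of_one_le_left hV helog
      _ = 2 * e ^ 2 * lg * V := by ring
      _ ≤ t * e ^ 2 * L * V := by gcongr
      _ = t * e ^ 2 * (N / L) := by rw [div_eq_mul_div_sq (by positivity : L ≠ 0)]; ring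
  · calc (2 * lg / c) ^ 3 = 8 * (B ^ 2 / c ^ 3 * lg ^ 3) / B ^ 2 := by field_simp; norm_num
      _ ≤ 8 * (K ^ 2 * (e ^ 2 * lg * lg ^ 3)) / B ^ 2 := by
        gcongr
        exact le_mul_of_one_le_left (by positivity) helog
      _ = 2 * e ^ 2 / B ^ 2 * (2 * (K * lg ^ 2)) ^ 2 := by ring
      _ ≤ t * e ^ 2 / B ^ 2 * (2 * V) ^ 2 := by gcongr

lemma eventually_mul_log_sq_le_div_sq {n l : ℕ → ℕ} (hn : ∀ i, 0 < n i)
    (hll : Tendsto (fun i => ((l i : ℝ) ^ 2 * (Real.log (l i)) ^ 2) / (n i : ℝ)) atTop (nhds 0))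
    {K : ℝ} (hK : 0 < K) :
    ∀ᶠ i in atTop, K * Real.log (l i) ^ 2 ≤ n i / (l i : ℝ) ^ 2 := by
  filter_upwards [hll.eventually_lt_const (one_div_pos.mpr hK)] with i hi
  rcases eq_or_ne (l i) 0 with hl | hl
  · simp [hl]
  have hN : (0 : ℝ) < n i := by exact_mod_cast hn i
  rw [div_lt_div_iff₀ hN hK] at hi
  rw [le_div_iff₀ (by positivity)]
  linarith

lemma one_le_sq_mul_of_one_le_mul_sqrt {e x : ℝ} (h : 1 ≤ e * Real.sqrt x) :
    1 ≤ e ^ 2 * x := by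
  have hx : 0 ≤ x := by
    by_contra! hx
    rw [Real.sqrt_eq_zero_of_nonpos hx.le, mul_zero] at h
    linarith
  calc 1 ≤ (e * Real.sqrt x) ^ 2 := one_le_pow₀ h
    _ = e ^ 2 * x := by rw [mul_pow, Real.sq_sqrt hx]

theorem higher_order_tail_sum_bound_general
    {Ω : Type*} [MeasurableSpace Ω] (P : Measure Ω)
    (n l : ℕ → ℕ) (ε t : ℕ → ℝ) (c B : ℝ) (hc : 0 < c) (hB : 0 < B)
    (T : ℕ → ℕ → Ω → ℝ) (s : ℕ → ℕ → ℝ)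
    (hn : ∀ i, 0 < n i)
    (hl : Tendsto l atTop atTop)
    (hll : Tendsto (fun i => ((l i : ℝ) ^ 2 * (Real.log (l i)) ^ 2) / (n i : ℝ))
      atTop (nhds 0))
    (hε : ∀ i, ε i ∈ Set.Ioo (0 : ℝ) 1)
    (hεlog : Tendsto (fun i => ε i * Real.sqrt (Real.log (l i))) atTop atTop)
    (ht : ∀ i, 2 ≤ t i)
    (htub : ∀ i, t i < ((n i : ℝ) / (l i : ℝ) ^ 2) * ε i ^ 4)
    (htail : ∀ i, ∀ j : ℕ, 2 ≤ j → j ≤ l i →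
      (P {ω | s i j ≤ |T i j ω|}).toReal ≤
        Real.exp (-(c * min
          ((t i * ε i ^ 2) ^ ((1 : ℝ) / j) * ((n i : ℝ) / (l i : ℝ)) ^ (((j : ℝ) - 1) / j))
          ((t i * ε i ^ 2 / B ^ 2) ^ ((1 : ℝ) / (j + 1)) *
            (((n i : ℝ) * j) / (l i : ℝ) ^ 2) ^ ((j : ℝ) / (j + 1)))))) :
    ∃ c₂ : ℝ, 0 < c₂ ∧ ∀ᶠ i in atTop,
      ∑ j ∈ Finset.Icc 2 (l i), (P {ω | s i j ≤ |T i j ω|}).toReal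
        ≤ Real.exp (-(c₂ * t i / ε i)) := by
  set M := max 1 B
  set K := 1 / c + 2 / c ^ 2 + B ^ 2 / c ^ 3 + 1
  have hM : 0 < M := lt_max_of_lt_left one_pos
  have hlR : Tendsto (fun i => (l i : ℝ)) atTop atTop := tendsto_natCast_atTop_atTop.comp hl
  refine ⟨c / (2 * M), by positivity, ?_⟩
  filter_upwards [hlR.eventually_ge_atTop 2,
    (Real.tendsto_log_atTop.comp hlR).eventually_ge_atTop 1,
    hεlog.eventually_ge_atTop 1, eventually_mul_log_sq_le_div_sq hn hll (K := K) (by positivity)]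
    with i hL hlog helog hN
  obtain ⟨he0, he1⟩ := hε i
  refine sum_Icc_le_of_le_div one_le_two (Real.exp_pos _).le fun j hj => ?_
  obtain ⟨hj2, hjl⟩ := mem_Icc.mp hj
  refine (htail i j hj2 hjl).trans (exp_neg_le_exp_neg_div (by positivity) ?_)
  have h₁ := div_le_tailExponent hj2 he0 he1.le (by linarith [ht i]) hL hB (htub i)
  have h₂ := two_mul_log_div_le_tailExponent hj2 hc hB (ht i) hL hlog
    (one_le_sq_mul_of_one_le_mul_sqrt helog) le_rfl hN
  change _ ≤ c * tailExponent _ _ _ _ j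
  calc c / (2 * M) * t i / ε i + Real.log (l i)
      = (c * (t i / (M * ε i)) + c * (2 * Real.log (l i) / c)) / 2 := by field_simp
    _ ≤ c * tailExponent (t i * ε i ^ 2) (n i) (l i) B j := by
      linarith [mul_le_mul_of_nonneg_left h₁ hc.le, mul_le_mul_of_nonneg_left h₂ hc.le]

/-- Summing the tail bounds for the higher-order Hoeffding terms: under
`l log² l ≪ n/l`, `ε ≫ log^{−1/2}(l)` and `t < (n/l²) ε⁴`, the sum of the `l−1`
exponential tail terms is eventually dominated by `exp(−c₂ t/ε)`. -/
theorem higher_order_tail_sum_bound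
    {Ω : Type*} [MeasurableSpace Ω] (P : Measure Ω) [IsProbabilityMeasure P]
    (n l : ℕ → ℕ) (ε t : ℕ → ℝ) (c B : ℝ) (hc : 0 < c) (hB : 0 < B)
    (T : ℕ → ℕ → Ω → ℝ) (s : ℕ → ℕ → ℝ)
    (hn : ∀ i, 0 < n i)
    (hl : Tendsto l atTop atTop)
    (hll : Tendsto (fun i => ((l i : ℝ) ^ 2 * (Real.log (l i)) ^ 2) / (n i : ℝ))
      atTop (nhds 0))
    (hε : ∀ i, ε i ∈ Set.Ioo (0 : ℝ) 1)
    (hεlog : Tendsto (fun i => ε i * Real.sqrt (Real.log (l i))) atTop atTop)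
    (ht : ∀ i, 2 ≤ t i)
    (htub : ∀ i, t i < ((n i : ℝ) / (l i : ℝ) ^ 2) * ε i ^ 4)
    (htail : ∀ i, ∀ j : ℕ, 2 ≤ j → j ≤ l i →
      (P {ω | s i j ≤ |T i j ω|}).toReal ≤
        Real.exp (-(c * min
          ((t i * ε i ^ 2) ^ ((1 : ℝ) / j) * ((n i : ℝ) / (l i : ℝ)) ^ (((j : ℝ) - 1) / j))
          ((t i * ε i ^ 2 / B ^ 2) ^ ((1 : ℝ) / (j + 1)) *
            (((n i : ℝ) * j) / (l i : ℝ) ^ 2) ^ ((j : ℝ) / (j + 1)))))) :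
    ∃ c₂ : ℝ, 0 < c₂ ∧ ∀ᶠ i in atTop,
      ∑ j ∈ Finset.Icc 2 (l i), (P {ω | s i j ≤ |T i j ω|}).toReal
        ≤ Real.exp (-(c₂ * t i / ε i)) :=
  higher_order_tail_sum_bound_general P n l ε t c B hc hB T s hn hl hll hε hεlog ht htub htail
end
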